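/- Let d ≥ 1 and 1 ≤ k ≤ d be integers. The ℂ-subspace of V_d consisting of those triples (a₀,a₁,a₂) for which the dehomogenizations a(x,y) = a₀(x,y,1) and b(x,y) = a₁(x,y,1) vanish to order at least k at the origin and whose degree-k homogeneous components a_k, b_k satisfy a_k·x + b_k·y = 0 (i.e., the corresponding foliation has a dicritical singularity of order ≥ k at p = [0:0:1]) has dimension (d² + 4d + 3) − (k² + 2k + 2). (This is the fiber of the bundle D_k; it yields that the locus D_k of foliations with a dicritical singularity of order ≥ k has codimension k(k+2) in P^N.) -/

import Mathlib

open MvPolynomial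

/-- The linear "Euler" map sending a triple `(a₀,a₁,a₂)` of polynomials to
`a₀z₀ + a₁z₁ + a₂z₂`. -/
noncomputable def eulerMap :
    (Fin 3 → MvPolynomial (Fin 3) ℂ) →ₗ[ℂ] MvPolynomial (Fin 3) ℂ :=
  ∑ i : Fin 3, (LinearMap.mulRight ℂ (X i : MvPolynomial (Fin 3) ℂ)).comp (LinearMap.proj i)

/-- The space `V_d` of triples `(a₀,a₁,a₂)` of homogeneous polynomials of
degree `d+1` in `ℂ[z₀,z₁,z₂]` satisfying `a₀z₀ + a₁z₁ + a₂z₂ = 0`. -/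
noncomputable def foliationSpace (d : ℕ) : Submodule ℂ (Fin 3 → MvPolynomial (Fin 3) ℂ) :=
  (⨅ i : Fin 3, Submodule.comap (LinearMap.proj i)
      (homogeneousSubmodule (Fin 3) ℂ (d + 1))) ⊓ LinearMap.ker eulerMap

/-- Dehomogenization `p(z₀,z₁,z₂) ↦ p(x,y,1)` as a linear map. -/
noncomputable def dehom : MvPolynomial (Fin 3) ℂ →ₗ[ℂ] MvPolynomial (Fin 2) ℂ :=
  (aeval ![X 0, X 1, 1] : MvPolynomial (Fin 3) ℂ →ₐ[ℂ] MvPolynomial (Fin 2) ℂ).toLinearMap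

/-- The subspace of polynomials in `ℂ[x,y]` vanishing to order `≥ k`
at the origin: all homogeneous components of degree `< k` vanish. -/
noncomputable def vanishToOrder (k : ℕ) : Submodule ℂ (MvPolynomial (Fin 2) ℂ) :=
  ⨅ n ∈ Finset.range k, LinearMap.ker (homogeneousComponent n :
    MvPolynomial (Fin 2) ℂ →ₗ[ℂ] MvPolynomial (Fin 2) ℂ)

/-- The fiber of `M_k`: triples in `V_d` whose dehomogenized coefficients
`a₀(x,y,1)`, `a₁(x,y,1)` vanish to order `≥ k` at the origin. -/
noncomputable def MkFiber (d k : ℕ) : Submodule ℂ (Fin 3 → MvPolynomial (Fin 3) ℂ) :=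
  foliationSpace d
    ⊓ Submodule.comap (dehom.comp (LinearMap.proj 0)) (vanishToOrder k)
    ⊓ Submodule.comap (dehom.comp (LinearMap.proj 1)) (vanishToOrder k)

/-- The linear map sending a triple `(a₀,a₁,a₂)` to `a_k·x + b_k·y`, where
`a_k`, `b_k` are the degree-`k` homogeneous components of `a₀(x,y,1)` and
`a₁(x,y,1)`.  Its vanishing is the dicritical condition in order `k`. -/
noncomputable def dicriticalMap (k : ℕ) :
    (Fin 3 → MvPolynomial (Fin 3) ℂ) →ₗ[ℂ] MvPolynomial (Fin 2) ℂ :=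
  (LinearMap.mulRight ℂ (X 0 : MvPolynomial (Fin 2) ℂ)).comp
      ((homogeneousComponent k).comp (dehom.comp (LinearMap.proj 0)))
    + (LinearMap.mulRight ℂ (X 1 : MvPolynomial (Fin 2) ℂ)).comp
      ((homogeneousComponent k).comp (dehom.comp (LinearMap.proj 1)))

/-- The fiber of `D_k`: triples in `V_d` with a dicritical singularity of
order `≥ k` at `p = [0:0:1]`. -/
noncomputable def DkFiber (d k : ℕ) : Submodule ℂ (Fin 3 → MvPolynomial (Fin 3) ℂ) :=
  MkFiber d k ⊓ LinearMap.ker (dicriticalMap k)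

/-!
In the chart `z₂ = 1` a triple `v ∈ V_d` is determined by `a = dehom (v 0)` and
`b = dehom (v 1)`, since `v 2` is recovered from the Euler relation, which also forces
`a_{d+1} x + b_{d+1} y = 0`. So `DkFiber d k` is cut out degree by degree: the components of
`a, b` vanish below degree `k`; in degrees `k` and `d + 1` they satisfy `a_n x + b_n y = 0`,
which kills the `x^n`-coefficient of `a_n` and then determines `b_n`; in degrees `k < n ≤ d`
they are free. The surviving coefficients are linear coordinates on the fiber, each with a unit
vector given by a Koszul syzygy `m (X t • eₛ - X s • eₜ)`, and there are
`k + (d + 1) + 2 ∑_{k < n ≤ d} (n + 1)` of them.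
-/

open Finset

namespace MvPolynomial

variable {σ R : Type*} [CommSemiring R]

attribute [local instance] gradedAlgebra in
theorem homogeneousComponent_mul_of_isHomogeneous {p q : MvPolynomial σ R} {j : ℕ}
    (hq : q.IsHomogeneous j) (i : ℕ) :
    homogeneousComponent (i + j) (p * q) = homogeneousComponent i p * q := by
  have := DirectSum.coe_decompose_mul_add_of_right_mem (homogeneousSubmodule σ R) (a := p)
    (i := i) ((mem_homogeneousSubmodule j q).mpr hq)
  rwa [← decomposition.decompose'_apply, ← decomposition.decompose'_apply]

theorem eq_zero_of_forall_homogeneousComponent_eq_zero {p : MvPolynomial σ R}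
    (h : ∀ n, homogeneousComponent n p = 0) : p = 0 := by
  rw [← sum_homogeneousComponent p]
  exact sum_eq_zero fun n _ => h n

theorem eq_zero_of_mul_X_add_mul_X_eq_zero {s t : σ} (hst : s ≠ t) {p q : MvPolynomial σ R}
    (h : p * X s + q * X t = 0) (hp : ∀ e : σ →₀ ℕ, e t ≠ 0 → coeff e p = 0) :
    p = 0 ∧ q = 0 := by
  classical
  have hp0 : p = 0 := by
    ext e
    by_cases he : e t = 0
    · have := congrArg (coeff (e + Finsupp.single s 1)) h
      rwa [coeff_add, coeff_mul_X, coeff_mul_X', if_neg, add_zero, coeff_zero] at this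
      simp [he, hst.symm]
    · exact hp e he
  refine ⟨hp0, ?_⟩
  ext e
  have := congrArg (coeff (e + Finsupp.single t 1)) h
  rwa [hp0, zero_mul, zero_add, coeff_mul_X, coeff_zero] at this

theorem IsHomogeneous.degree_eq_of_coeff_ne_zero {p : MvPolynomial σ R} {n : ℕ}
    (hp : p.IsHomogeneous n) {m : σ →₀ ℕ} (hm : coeff m p ≠ 0) : m.degree = n :=
  by_contra fun h => hm (hp.coeff_eq_zero h)

end MvPolynomial

lemma eulerMap_apply (v : Fin 3 → MvPolynomial (Fin 3) ℂ) :
    eulerMap v = v 0 * X 0 + v 1 * X 1 + v 2 * X 2 := by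
  simp [eulerMap, Fin.sum_univ_three]

lemma eulerMap_single (s : Fin 3) (p : MvPolynomial (Fin 3) ℂ) :
    eulerMap (Pi.single s p) = p * X s := by
  simp [eulerMap, Pi.single_apply]

lemma mem_foliationSpace_iff {d : ℕ} {v : Fin 3 → MvPolynomial (Fin 3) ℂ} :
    v ∈ foliationSpace d ↔ (∀ i, (v i).IsHomogeneous (d + 1)) ∧ eulerMap v = 0 := by
  simp [foliationSpace, mem_homogeneousSubmodule]

lemma mem_vanishToOrder_iff {k : ℕ} {p : MvPolynomial (Fin 2) ℂ} :
    p ∈ vanishToOrder k ↔ ∀ n < k, homogeneousComponent n p = 0 := by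
  simp [vanishToOrder]

lemma dicriticalMap_apply (k : ℕ) (v : Fin 3 → MvPolynomial (Fin 3) ℂ) :
    dicriticalMap k v = homogeneousComponent k (dehom (v 0)) * X 0
      + homogeneousComponent k (dehom (v 1)) * X 1 := rfl

lemma mem_DkFiber_iff {d k : ℕ} {v : Fin 3 → MvPolynomial (Fin 3) ℂ} :
    v ∈ DkFiber d k ↔ v ∈ foliationSpace d ∧ dehom (v 0) ∈ vanishToOrder k ∧
      dehom (v 1) ∈ vanishToOrder k ∧ dicriticalMap k v = 0 := by
  simp [DkFiber, MkFiber, and_assoc]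

lemma dehom_apply (p : MvPolynomial (Fin 3) ℂ) : dehom p = aeval ![X 0, X 1, 1] p := rfl

lemma dehom_mul (p q : MvPolynomial (Fin 3) ℂ) : dehom (p * q) = dehom p * dehom q :=
  map_mul (aeval ![X 0, X 1, 1]) p q

@[simp] lemma dehom_X_zero : dehom (X 0) = X 0 := aeval_X _ _
@[simp] lemma dehom_X_one : dehom (X 1) = X 1 := aeval_X _ _
@[simp] lemma dehom_X_two : dehom (X 2) = 1 := aeval_X _ _

lemma dehom_rename_castSucc (q : MvPolynomial (Fin 2) ℂ) :
    dehom (rename Fin.castSucc q) = q := by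
  rw [dehom_apply, aeval_rename]
  convert aeval_X_left_apply q
  ext i : 1
  fin_cases i <;> rfl

noncomputable def affineExp (m : Fin 3 →₀ ℕ) : Fin 2 →₀ ℕ :=
  Finsupp.equivFunOnFinite.symm ![m 0, m 1]

@[simp] lemma affineExp_apply_zero (m : Fin 3 →₀ ℕ) : affineExp m 0 = m 0 := rfl
@[simp] lemma affineExp_apply_one (m : Fin 3 →₀ ℕ) : affineExp m 1 = m 1 := rfl

lemma degree_affineExp_add (m : Fin 3 →₀ ℕ) : (affineExp m).degree + m 2 = m.degree := by
  simp [Finsupp.degree_eq_sum, Fin.sum_univ_succ, add_assoc]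

lemma eq_of_affineExp_eq {m m' : Fin 3 →₀ ℕ} (hdeg : m.degree = m'.degree)
    (h : affineExp m = affineExp m') : m = m' := by
  have h2 : m 2 = m' 2 := by
    have := degree_affineExp_add m
    have := degree_affineExp_add m'
    rw [h] at *
    omega
  have h0 := congrArg (· 0) h
  have h1 := congrArg (· 1) h
  simp only [affineExp_apply_zero, affineExp_apply_one] at h0 h1
  ext i
  fin_cases i <;> assumption

lemma dehom_monomial (m : Fin 3 →₀ ℕ) (c : ℂ) :
    dehom (monomial m c) = monomial (affineExp m) c := by
  rw [dehom_apply, aeval_monomial, monomial_eq, Finsupp.prod_fintype _ _ (by simp),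
    Finsupp.prod_fintype _ _ (by simp)]
  simp [Fin.prod_univ_succ]

lemma coeff_dehom (p : MvPolynomial (Fin 3) ℂ) (e : Fin 2 →₀ ℕ) :
    coeff e (dehom p) = ∑ m ∈ p.support with affineExp m = e, coeff m p := by
  conv_lhs => rw [p.as_sum]
  simp only [map_sum, dehom_monomial, coeff_sum, coeff_monomial, sum_filter]

namespace MvPolynomial.IsHomogeneous

variable {p : MvPolynomial (Fin 3) ℂ} {D : ℕ}

lemma coeff_affineExp_dehom (hp : p.IsHomogeneous D) {m : Fin 3 →₀ ℕ} (hm : m.degree = D) :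
    coeff (affineExp m) (dehom p) = coeff m p := by
  rw [coeff_dehom, sum_eq_single m]
  · intro m' hm' hne
    rw [mem_filter, mem_support_iff] at hm'
    exact absurd (eq_of_affineExp_eq ((hp.degree_eq_of_coeff_ne_zero hm'.1).trans hm.symm) hm'.2)
      hne
  · intro hm'
    by_contra h
    exact hm' (mem_filter.mpr ⟨mem_support_iff.mpr h, rfl⟩)

lemma eq_zero_of_dehom_eq_zero (hp : p.IsHomogeneous D) (h : dehom p = 0) : p = 0 := by
  ext m
  by_cases hm : m.degree = D
  · rw [← hp.coeff_affineExp_dehom hm, h, coeff_zero, coeff_zero]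
  · rw [hp.coeff_eq_zero hm, coeff_zero]

lemma homogeneousComponent_dehom_eq_zero (hp : p.IsHomogeneous D) {n : ℕ} (hn : D < n) :
    homogeneousComponent n (dehom p) = 0 := by
  ext e
  rw [coeff_homogeneousComponent, coeff_zero, coeff_dehom]
  split_ifs with he
  · refine sum_eq_zero fun m hm => ?_
    rw [mem_filter, mem_support_iff] at hm
    have := degree_affineExp_add m
    rw [hm.2, he, hp.degree_eq_of_coeff_ne_zero hm.1] at this
    omega
  · rfl

end MvPolynomial.IsHomogeneous

lemma dicriticalMap_succ_eq_zero_of_mem_foliationSpace {d : ℕ}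
    {v : Fin 3 → MvPolynomial (Fin 3) ℂ} (hv : v ∈ foliationSpace d) :
    dicriticalMap (d + 1) v = 0 := by
  obtain ⟨hhom, heuler⟩ := mem_foliationSpace_iff.mp hv
  rw [eulerMap_apply] at heuler
  rw [dicriticalMap_apply]
  have := congrArg (fun p => homogeneousComponent (d + 1 + 1) (dehom p)) heuler
  simpa only [map_add, dehom_mul, dehom_X_zero, dehom_X_one, dehom_X_two, mul_one,
    homogeneousComponent_mul_of_isHomogeneous (isHomogeneous_X ℂ _),
    (hhom 2).homogeneousComponent_dehom_eq_zero (Nat.lt_succ_self _), add_zero, map_zero]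
    using this

theorem pair_eq_zero_of_free_coeffs_eq_zero {d k : ℕ} {a b : MvPolynomial (Fin 2) ℂ}
    (hlow : ∀ n < k, homogeneousComponent n a = 0 ∧ homogeneousComponent n b = 0)
    (hhigh : ∀ n, d + 1 < n → homogeneousComponent n a = 0 ∧ homogeneousComponent n b = 0)
    (hdic : homogeneousComponent k a * X 0 + homogeneousComponent k b * X 1 = 0)
    (htop : homogeneousComponent (d + 1) a * X 0 + homogeneousComponent (d + 1) b * X 1 = 0)
    (ha : ∀ e : Fin 2 →₀ ℕ, k < e.degree ∧ e.degree ≤ d ∨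
      (e.degree = k ∨ e.degree = d + 1) ∧ e 1 ≠ 0 → coeff e a = 0)
    (hb : ∀ e : Fin 2 →₀ ℕ, k < e.degree → e.degree ≤ d → coeff e b = 0) :
    a = 0 ∧ b = 0 := by
  have hend : ∀ n, n = k ∨ n = d + 1 →
      homogeneousComponent n a * X 0 + homogeneousComponent n b * X 1 = 0 →
      homogeneousComponent n a = 0 ∧ homogeneousComponent n b = 0 := fun n hn h =>
    eq_zero_of_mul_X_add_mul_X_eq_zero (by decide) h fun e he => by
      rw [coeff_homogeneousComponent]
      split_ifs with hdeg
      · exact ha e (Or.inr ⟨hdeg ▸ hn, he⟩)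
      · rfl
  suffices h : ∀ n, homogeneousComponent n a = 0 ∧ homogeneousComponent n b = 0 from
    ⟨eq_zero_of_forall_homogeneousComponent_eq_zero fun n => (h n).1,
      eq_zero_of_forall_homogeneousComponent_eq_zero fun n => (h n).2⟩
  intro n
  rcases lt_trichotomy n k with hnk | rfl | hkn
  · exact hlow n hnk
  · exact hend n (Or.inl rfl) hdic
  rcases lt_trichotomy n (d + 1) with hnd | rfl | hdn
  · constructor <;>
      refine homogeneousComponent_eq_zero' _ _ fun e he hdeg => mem_support_iff.mp he ?_
    · exact ha e (Or.inl ⟨hdeg ▸ hkn, by omega⟩)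
    · exact hb e (hdeg ▸ hkn) (by omega)
  · exact hend _ (Or.inr rfl) htop
  · exact hhigh n hdn

noncomputable def expsOfDegree (n : ℕ) : Finset (Fin 2 →₀ ℕ) := univ.finsuppAntidiag n

lemma mem_expsOfDegree {n : ℕ} {e : Fin 2 →₀ ℕ} :
    e ∈ expsOfDegree n ↔ e.degree = n := by
  simp [expsOfDegree, Finsupp.degree_eq_sum]

lemma card_expsOfDegree (n : ℕ) : #(expsOfDegree n) = n + 1 := by
  rw [expsOfDegree, card_finsuppAntidiag_nat_eq_choose, card_univ, Fintype.card_fin,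
    show 2 + n - 1 = n + 1 by omega, Nat.choose_succ_self_right]

lemma card_expsOfDegree_filter (n : ℕ) : #{e ∈ expsOfDegree n | e 1 ≠ 0} = n := by
  have hx : {e ∈ expsOfDegree n | ¬ e 1 ≠ 0} = {Finsupp.single 0 n} := by
    ext e
    simp only [mem_filter, mem_expsOfDegree, not_not, mem_singleton, Finsupp.degree_eq_sum,
      Fin.sum_univ_two]
    constructor
    · rintro ⟨hdeg, h1⟩
      ext i; fin_cases i <;> simp_all
    · rintro rfl; simp
  have := card_filter_add_card_filter_not (s := expsOfDegree n) (fun e => e 1 ≠ 0)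
  rw [hx, card_singleton, card_expsOfDegree] at this
  omega

lemma disjoint_expsOfDegree {m n : ℕ} (h : m ≠ n) :
    Disjoint (expsOfDegree m) (expsOfDegree n) :=
  disjoint_left.mpr fun _ hm hn => h ((mem_expsOfDegree.mp hm).symm.trans (mem_expsOfDegree.mp hn))

lemma two_mul_sum_Ioc_add_one {k d : ℕ} (h : k ≤ d) :
    2 * ∑ n ∈ Ioc k d, (n + 1) + (k + 1) * (k + 2) = (d + 1) * (d + 2) := by
  induction d, h using Nat.le_induction with
  | base => simp
  | succ d hkd ih =>
    rw [sum_Ioc_succ_top hkd]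
    linarith

noncomputable def freePositions (d k : ℕ) : Finset (Fin 3 × (Fin 2 →₀ ℕ)) :=
  ({0, 1} : Finset (Fin 3)) ×ˢ (Ioc k d).biUnion expsOfDegree ∪
    {0} ×ˢ ({k, d + 1} : Finset ℕ).biUnion fun n => {e ∈ expsOfDegree n | e 1 ≠ 0}

lemma mem_freePositions {d k : ℕ} {x : Fin 3 × (Fin 2 →₀ ℕ)} :
    x ∈ freePositions d k ↔ (x.1 = 0 ∨ x.1 = 1) ∧ k < x.2.degree ∧ x.2.degree ≤ d ∨
      x.1 = 0 ∧ (x.2.degree = k ∨ x.2.degree = d + 1) ∧ x.2 1 ≠ 0 := by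
  simp only [freePositions, mem_union, mem_product, mem_biUnion, mem_Ioc,
    mem_singleton, mem_insert, mem_filter, mem_expsOfDegree]
  aesop

lemma card_freePositions {d k : ℕ} (h : k ≤ d) :
    #(freePositions d k) = d ^ 2 + 4 * d + 3 - (k ^ 2 + 2 * k + 2) := by
  have hends : ({k, d + 1} : Finset ℕ).biUnion (fun n => {e ∈ expsOfDegree n | e 1 ≠ 0}) =
      {e ∈ expsOfDegree k | e 1 ≠ 0} ∪ {e ∈ expsOfDegree (d + 1) | e 1 ≠ 0} := by
    rw [biUnion_insert, singleton_biUnion]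
  rw [freePositions, card_union_of_disjoint, card_product, card_product, hends,
    card_union_of_disjoint, card_biUnion fun _ _ _ _ => disjoint_expsOfDegree, card_singleton,
    card_expsOfDegree_filter, card_expsOfDegree_filter]
  · simp only [card_expsOfDegree, card_pair (show (0 : Fin 3) ≠ 1 by decide)]
    have := two_mul_sum_Ioc_add_one h
    apply Nat.eq_sub_of_add_eq
    linarith
  · exact disjoint_filter_filter (disjoint_expsOfDegree (by omega))
  · rw [disjoint_left]
    rintro ⟨s, e⟩ h1 h2
    simp only [mem_product, mem_biUnion, mem_Ioc, mem_expsOfDegree, mem_filter, mem_insert,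
      mem_singleton] at h1 h2
    grind

noncomputable def freeCoord (d k : ℕ) :
    (Fin 3 → MvPolynomial (Fin 3) ℂ) →ₗ[ℂ] (freePositions d k → ℂ) :=
  LinearMap.pi fun x => lcoeff ℂ x.1.2 ∘ₗ dehom ∘ₗ LinearMap.proj x.1.1

lemma freeCoord_apply (d k : ℕ) (v : Fin 3 → MvPolynomial (Fin 3) ℂ) (x : freePositions d k) :
    freeCoord d k v x = coeff x.1.2 (dehom (v x.1.1)) := rfl

lemma eq_zero_of_mem_DkFiber_of_freeCoord_eq_zero {d k : ℕ}
    {v : Fin 3 → MvPolynomial (Fin 3) ℂ} (hv : v ∈ DkFiber d k)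
    (hcoord : freeCoord d k v = 0) : v = 0 := by
  obtain ⟨hfol, hvan0, hvan1, hdic⟩ := mem_DkFiber_iff.mp hv
  obtain ⟨hhom, heuler⟩ := mem_foliationSpace_iff.mp hfol
  have hfree : ∀ x ∈ freePositions d k, coeff x.2 (dehom (v x.1)) = 0 := fun x hx =>
    congrFun hcoord ⟨x, hx⟩
  obtain ⟨ha, hb⟩ := pair_eq_zero_of_free_coeffs_eq_zero (d := d) (k := k)
    (fun n hn => ⟨mem_vanishToOrder_iff.mp hvan0 n hn, mem_vanishToOrder_iff.mp hvan1 n hn⟩)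
    (fun n hn => ⟨(hhom 0).homogeneousComponent_dehom_eq_zero hn,
      (hhom 1).homogeneousComponent_dehom_eq_zero hn⟩)
    (by rwa [dicriticalMap_apply] at hdic) (by simpa only [dicriticalMap_apply] using
      dicriticalMap_succ_eq_zero_of_mem_foliationSpace hfol)
    (fun e he => hfree (0, e) (mem_freePositions.mpr (by simpa using he)))
    (fun e h1 h2 => hfree (1, e) (mem_freePositions.mpr (Or.inl ⟨Or.inr rfl, h1, h2⟩)))
  have h0 := (hhom 0).eq_zero_of_dehom_eq_zero ha
  have h1 := (hhom 1).eq_zero_of_dehom_eq_zero hb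
  have h2 : v 2 = 0 := by
    simpa [eulerMap_apply, h0, h1, X_ne_zero] using heuler
  ext1 i
  fin_cases i
  exacts [h0, h1, h2]

noncomputable def koszul (m : MvPolynomial (Fin 3) ℂ) (s t : Fin 3) :
    Fin 3 → MvPolynomial (Fin 3) ℂ :=
  Pi.single s (m * X t) - Pi.single t (m * X s)

lemma koszul_mem_foliationSpace {d : ℕ} {m : MvPolynomial (Fin 3) ℂ} (hm : m.IsHomogeneous d)
    (s t : Fin 3) : koszul m s t ∈ foliationSpace d := by
  refine mem_foliationSpace_iff.mpr ⟨fun i => ?_, ?_⟩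
  · have hsingle : ∀ (j : Fin 3) (p : MvPolynomial (Fin 3) ℂ), p.IsHomogeneous (d + 1) →
        (Pi.single (M := fun _ => MvPolynomial (Fin 3) ℂ) j p i).IsHomogeneous (d + 1) := by
      intro j p hp
      rcases eq_or_ne i j with rfl | h
      · simpa using hp
      · simpa [h] using isHomogeneous_zero _ _ _
    exact (hsingle s _ (hm.mul (isHomogeneous_X ℂ t))).sub
      (hsingle t _ (hm.mul (isHomogeneous_X ℂ s)))
  · rw [koszul, map_sub, eulerMap_single, eulerMap_single]
    ring

lemma koszul_apply_left {s t : Fin 3} (hst : s ≠ t) (m : MvPolynomial (Fin 3) ℂ) :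
    koszul m s t s = m * X t := by
  simp [koszul, hst]

lemma koszul_apply_right {s t : Fin 3} (hst : s ≠ t) (m : MvPolynomial (Fin 3) ℂ) :
    koszul m s t t = -(m * X s) := by
  simp [koszul, hst.symm]

noncomputable def liftMonomial (e : Fin 2 →₀ ℕ) (l : ℕ) : MvPolynomial (Fin 3) ℂ :=
  rename Fin.castSucc (monomial e 1) * X 2 ^ l

lemma isHomogeneous_liftMonomial (e : Fin 2 →₀ ℕ) (l : ℕ) :
    (liftMonomial e l).IsHomogeneous (e.degree + l) :=
  ((isHomogeneous_monomial _ rfl).rename_isHomogeneous).mul (isHomogeneous_X_pow _ _)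

lemma dehom_liftMonomial (e : Fin 2 →₀ ℕ) (l : ℕ) :
    dehom (liftMonomial e l) = monomial e 1 := by
  rw [liftMonomial, dehom_mul, dehom_rename_castSucc, dehom_apply, map_pow, aeval_X]
  simp

lemma dehom_koszul_two_apply (m : MvPolynomial (Fin 3) ℂ) (s : Fin 3) {t : Fin 3} (ht : t ≠ 2) :
    dehom (koszul m s 2 t) = if t = s then dehom m else 0 := by
  rcases eq_or_ne t s with rfl | h
  · simp [koszul, ht, dehom_mul]
  · simp [koszul, ht, h]

lemma mem_DkFiber_of_isHomogeneous_dehom {d k n : ℕ} {v : Fin 3 → MvPolynomial (Fin 3) ℂ}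
    (hv : v ∈ foliationSpace d) (hkn : k ≤ n) (h0 : (dehom (v 0)).IsHomogeneous n)
    (h1 : (dehom (v 1)).IsHomogeneous n)
    (hdic : k = n → dehom (v 0) * X 0 + dehom (v 1) * X 1 = 0) : v ∈ DkFiber d k := by
  rw [← mem_homogeneousSubmodule] at h0 h1
  have hvan : ∀ p ∈ homogeneousSubmodule (Fin 2) ℂ n, p ∈ vanishToOrder k := fun p hp =>
    mem_vanishToOrder_iff.mpr fun m hm => by
      rw [homogeneousComponent_of_mem hp, if_neg (by omega)]
  refine mem_DkFiber_iff.mpr ⟨hv, hvan _ h0, hvan _ h1, ?_⟩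
  rw [dicriticalMap_apply, homogeneousComponent_of_mem h0, homogeneousComponent_of_mem h1]
  split_ifs with hk
  · exact hdic hk
  · ring

lemma koszul_two_mem_DkFiber {d k n : ℕ} {m : MvPolynomial (Fin 3) ℂ} (hm : m.IsHomogeneous d)
    (hdm : (dehom m).IsHomogeneous n) (hkn : k < n) (s : Fin 3) :
    koszul m s 2 ∈ DkFiber d k := by
  have hslot : ∀ t : Fin 3, t ≠ 2 → (dehom (koszul m s 2 t)).IsHomogeneous n := fun t ht => by
    rw [dehom_koszul_two_apply m s ht]
    split_ifs
    exacts [hdm, isHomogeneous_zero _ _ _]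
  exact mem_DkFiber_of_isHomogeneous_dehom (koszul_mem_foliationSpace hm s 2) hkn.le
    (hslot 0 (by decide)) (hslot 1 (by decide)) (by omega)

lemma koszul_zero_one_mem_DkFiber {d k n : ℕ} {m : MvPolynomial (Fin 3) ℂ}
    (hm : m.IsHomogeneous d) (hdm : (dehom m).IsHomogeneous n) (hkn : k ≤ n + 1) :
    koszul m 0 1 ∈ DkFiber d k := by
  have h0 : dehom (koszul m 0 1 0) = dehom m * X 1 := by
    rw [koszul_apply_left (by decide), dehom_mul, dehom_X_one]
  have h1 : dehom (koszul m 0 1 1) = -(dehom m * X 0) := by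
    rw [koszul_apply_right (by decide), map_neg, dehom_mul, dehom_X_zero]
  refine mem_DkFiber_of_isHomogeneous_dehom (koszul_mem_foliationSpace hm 0 1) hkn ?_ ?_ ?_
  · exact h0 ▸ hdm.mul (isHomogeneous_X ℂ 1)
  · exact h1 ▸ (hdm.mul (isHomogeneous_X ℂ 0)).neg
  · intro
    rw [h0, h1]
    ring

lemma degree_sub_single_one_add_one {e : Fin 2 →₀ ℕ} (he : e 1 ≠ 0) :
    (e - Finsupp.single 1 1).degree + 1 = e.degree := by
  simp only [Finsupp.degree_eq_sum, Finsupp.coe_tsub, Pi.sub_apply, Fin.sum_univ_two,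
    Finsupp.single_eq_of_ne zero_ne_one, tsub_zero, Finsupp.single_eq_same]
  omega

lemma monomial_sub_single_one_mul_X_one {e : Fin 2 →₀ ℕ} (he : e 1 ≠ 0) :
    monomial (e - Finsupp.single 1 1) (1 : ℂ) * X 1 = monomial e 1 := by
  rw [X, monomial_mul, one_mul,
    tsub_add_cancel_of_le (Finsupp.single_le_iff.mpr (Nat.one_le_iff_ne_zero.mpr he))]

/-- In degrees `k < n ≤ d` each slot is paired with `z₂`; in the end degrees `k` and `d + 1` the
relation `a_n x + b_n y = 0` forces pairing slot `0` with slot `1`. -/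
noncomputable def freeGenerator (d k : ℕ) (x : Fin 3 × (Fin 2 →₀ ℕ)) :
    Fin 3 → MvPolynomial (Fin 3) ℂ :=
  if k < x.2.degree ∧ x.2.degree ≤ d then
    koszul (liftMonomial x.2 (d - x.2.degree)) x.1 2
  else
    koszul (liftMonomial (x.2 - Finsupp.single 1 1) (d + 1 - x.2.degree)) 0 1

lemma freeGenerator_mem {d k : ℕ} (hkd : k ≤ d) {x : Fin 3 × (Fin 2 →₀ ℕ)}
    (hx : x ∈ freePositions d k) :
    freeGenerator d k x ∈ DkFiber d k := by
  rw [freeGenerator]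
  split_ifs with hmid
  · have hL := isHomogeneous_liftMonomial x.2 (d - x.2.degree)
    rw [show x.2.degree + (d - x.2.degree) = d by omega] at hL
    refine koszul_two_mem_DkFiber hL ?_ hmid.1 x.1
    rw [dehom_liftMonomial]
    exact isHomogeneous_monomial _ rfl
  · obtain ⟨-, hdeg, he⟩ := (mem_freePositions.mp hx).resolve_left (by tauto)
    have := degree_sub_single_one_add_one he
    have hL : (liftMonomial (x.2 - Finsupp.single 1 1) (d + 1 - x.2.degree)).IsHomogeneous d := by
      convert isHomogeneous_liftMonomial _ _ using 1
      omega
    refine koszul_zero_one_mem_DkFiber hL ?_ (n := (x.2 - Finsupp.single 1 1).degree) (by omega)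
    rw [dehom_liftMonomial]
    exact isHomogeneous_monomial _ rfl

lemma freeCoord_freeGenerator {d k : ℕ} (x y : freePositions d k) :
    freeCoord d k (freeGenerator d k x) y = Pi.single (M := fun _ => ℂ) x 1 y := by
  obtain ⟨⟨s, e⟩, hx⟩ := x
  obtain ⟨⟨t, f⟩, hy⟩ := y
  simp only [freeCoord_apply, Pi.single_apply, Subtype.mk.injEq, Prod.mk.injEq]
  have ht : t = 0 ∨ t = 1 := by rw [mem_freePositions] at hy; tauto
  by_cases hmid : k < e.degree ∧ e.degree ≤ d
  · rw [freeGenerator, if_pos hmid,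
      dehom_koszul_two_apply _ _ (by rcases ht with rfl | rfl <;> decide), dehom_liftMonomial]
    by_cases hts : t = s
    · simp [hts, coeff_monomial, eq_comm]
    · simp [hts]
  · rw [freeGenerator, if_neg hmid]
    obtain ⟨rfl, hdeg, he⟩ := (mem_freePositions.mp hx).resolve_left (by tauto)
    dsimp only at hdeg he
    rcases ht with rfl | rfl
    · rw [koszul_apply_left (by decide), dehom_mul, dehom_liftMonomial, dehom_X_one,
        monomial_sub_single_one_mul_X_one he, coeff_monomial]
      simp [eq_comm]
    · have hf : k < f.degree ∧ f.degree ≤ d := by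
        rw [mem_freePositions] at hy
        exact hy.elim And.right fun h => absurd h.1 one_ne_zero
      have hhom := (isHomogeneous_monomial (d := e - Finsupp.single 1 1) (1 : ℂ) rfl).mul
        (isHomogeneous_X ℂ 0)
      rw [degree_sub_single_one_add_one he] at hhom
      rw [koszul_apply_right (by decide), map_neg, dehom_mul, dehom_liftMonomial, dehom_X_zero,
        coeff_neg, hhom.coeff_eq_zero (by omega), neg_zero, if_neg fun h => one_ne_zero h.1]

theorem dim_DkFiber_general (d k : ℕ) (hk2 : k ≤ d) :
    Module.finrank ℂ (DkFiber d k) = d ^ 2 + 4 * d + 3 - (k ^ 2 + 2 * k + 2) := by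
  let φ := freeCoord d k ∘ₗ (DkFiber d k).subtype
  have hinj : Function.Injective φ := (injective_iff_map_eq_zero φ).mpr fun v hv =>
    Subtype.ext (eq_zero_of_mem_DkFiber_of_freeCoord_eq_zero v.2 hv)
  have hsurj : Function.Surjective φ := fun c =>
    ⟨⟨∑ x, c x • freeGenerator d k x,
      Submodule.sum_mem _ fun x _ => Submodule.smul_mem _ _ (freeGenerator_mem hk2 x.2)⟩, by
      ext y
      simp [φ, freeCoord_freeGenerator, Pi.single_apply]⟩
  rw [(LinearEquiv.ofBijective φ ⟨hinj, hsurj⟩).finrank_eq, Module.finrank_fintype_fun_eq_card,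
    Fintype.card_coe, card_freePositions hk2]

theorem dim_DkFiber (d k : ℕ) (hd : 1 ≤ d) (hk1 : 1 ≤ k) (hk2 : k ≤ d) :
    Module.finrank ℂ (DkFiber d k) = d ^ 2 + 4 * d + 3 - (k ^ 2 + 2 * k + 2) :=
  dim_DkFiber_general d k hk2
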